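/- arXiv:1609.03198 — 3 statements merged into one kernel-verified Lean document; each statement's English description precedes it below -/
import Mathlib

section
/- Let f ∈ Den[a,b], let F(x) = ∫_a^x f (the indefinite Denjoy integral), and let K ⊆ [a,b] be closed. Then (i) D_f^∞(K) = ∅, (ii) D_F^∞(K) = ∅, and (iii) D_{f,F}^∞(K) = ∅. -/
open MeasureTheory Set Filter

noncomputable section

attribute [local instance] Classical.propDecidable

/-- The oscillation `ω(F, J)` of `F` on the set `J`. -/
def osc (F : ℝ → ℝ) (J : Set ℝ) : ℝ :=
  sSup {d : ℝ | ∃ x ∈ J, ∃ y ∈ J, d = |F x - F y|}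

/-- `D` is a `K`-edged pre-partition of `[a,b]`: a finite nonempty collection of
pairwise non-overlapping closed subintervals of `[a,b]` whose endpoints lie in `K`. -/
def IsPrePartition (a b : ℝ) (K : Set ℝ) (D : Finset (ℝ × ℝ)) : Prop :=
  D.Nonempty ∧
  (∀ p ∈ D, p.1 ≤ p.2 ∧ p.1 ∈ K ∧ p.2 ∈ K ∧ Icc p.1 p.2 ⊆ Icc a b) ∧
  (D : Set (ℝ × ℝ)).Pairwise fun p q => p.2 ≤ q.1 ∨ q.2 ≤ p.1

/-- `F ∈ AC_*(K)`: absolute continuity in the restricted sense on `K`. -/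
def ACStar (a b : ℝ) (F : ℝ → ℝ) (K : Set ℝ) : Prop :=
  ∀ ε > (0:ℝ), ∃ δ > (0:ℝ), ∀ D : Finset (ℝ × ℝ), IsPrePartition a b K D →
    (∑ p ∈ D, (p.2 - p.1)) < δ → (∑ p ∈ D, osc F (Icc p.1 p.2)) < ε

/-- `F ∈ ACG_*(K)`: `K` is a countable union of closed sets `Kₙ ⊆ [a,b]` with `F ∈ AC_*(Kₙ)`. -/
def ACGStar (a b : ℝ) (F : ℝ → ℝ) (K : Set ℝ) : Prop :=
  ∃ C : ℕ → Set ℝ, (∀ n, IsClosed (C n) ∧ C n ⊆ Icc a b ∧ ACStar a b F (C n)) ∧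
    K = ⋃ n, C n

/-- `F` is the indefinite Denjoy integral of `f` on `[a,b]`:
`F` is continuous on `[a,b]`, `F(a) = 0`, `F ∈ ACG_*([a,b])`, and `F' = f` a.e. on `[a,b]`. -/
def HasDenjoyIntegralFn (a b : ℝ) (f F : ℝ → ℝ) : Prop :=
  ContinuousOn F (Icc a b) ∧ F a = 0 ∧ ACGStar a b F (Icc a b) ∧
    ∀ᵐ x ∂(volume.restrict (Icc a b)), HasDerivAt F (f x) x

/-- `f ∈ Den[a,b]`: `f` is Denjoy integrable on `[a,b]`. -/
def DenjoyIntegrable (a b : ℝ) (f : ℝ → ℝ) : Prop :=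
  ∃ F : ℝ → ℝ, HasDenjoyIntegralFn a b f F

/-- The Denjoy integral `∫_a^b f` (junk value `0` if `f` is not Denjoy integrable). -/
def denjoyIntegral (a b : ℝ) (f : ℝ → ℝ) : ℝ :=
  if h : DenjoyIntegrable a b f then Classical.choose h b else 0

/-- The derivative `D_f(K)`: points of `K` at which `f` is not locally Lebesgue integrable
relative to `K`. -/
def Df (f : ℝ → ℝ) (K : Set ℝ) : Set ℝ :=
  {x ∈ K | ∀ c d : ℝ, c < x → x < d → ¬ IntegrableOn f (Icc c d ∩ K) volume}

/-- The derivative `D_F(K)`: points of `K` at which `F` is not locally `AC_*` relative to `K`. -/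
def DF (a b : ℝ) (F : ℝ → ℝ) (K : Set ℝ) : Set ℝ :=
  {x ∈ K | ∀ c d : ℝ, c < x → x < d → ¬ ACStar a b F (Icc c d ∩ K)}

/-- The derivative `D_{f,F}(K) = D_f(K) ∪ D_F(K)`. -/
def DfF (a b : ℝ) (f F : ℝ → ℝ) (K : Set ℝ) : Set ℝ := Df f K ∪ DF a b F K

/-- Transfinite iterates of a derivative operation on sets:
`D⁰(K) = K`, `D^(α+1)(K) = D(D^α(K))`, and `D^α(K) = ⋂_(β<α) D^β(K)` for limit `α`. -/
def derivIter (D : Set ℝ → Set ℝ) (K : Set ℝ) (α : Ordinal.{0}) : Set ℝ :=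
  Ordinal.limitRecOn α K (fun _ ih => D ih) (fun o _ ih => ⋂ β : Iio o, ih β.1 β.2)

/-- `D^∞(K) = ⋂_(α<ω₁) D^α(K)`. -/
def derivInfty (D : Set ℝ → Set ℝ) (K : Set ℝ) : Set ℝ :=
  ⋂ (α : Ordinal.{0}) (_ : α.card ≤ Cardinal.aleph0), derivIter D K α

/-
Each of `D_f`, `D_F`, `D_{f,F}` maps a closed set `L` to a closed subset of `L`, so the iterates
`D^α(K)` form a decreasing chain of closed sets. In a second countable space such a chain can
drop strictly at only countably many steps, hence it suffices that every nonempty closed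
`L ⊆ [a,b]` has a point outside `D_f(L) ∪ D_F(L)`.

For this, restrict the cover `[a,b] = ⋃ Kₙ` to `L`: by Baire's theorem some portion
`[x-r, x+r] ∩ L` lies in one `Kₙ`, so `F ∈ AC*` on it. Taking `r` below the `δ` of `ε = 1`, `F`
has bounded variation on the portion, and at almost every point of it `|f| = |F'|` is at most the
derivative of the variation function `V` of `F`. Since `∫ V'` is the measure of the bounded set
`V([x-r, x+r] ∩ L)`, `f` is integrable on the portion.
-/

open Topology

theorem IsCompact.abs_sub_le_osc {F : ℝ → ℝ} {J : Set ℝ} (hJ : IsCompact J)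
    (hF : ContinuousOn F J) {x y : ℝ} (hx : x ∈ J) (hy : y ∈ J) : |F x - F y| ≤ osc F J := by
  obtain ⟨C, hC⟩ := hJ.exists_bound_of_continuousOn hF
  refine le_csSup ⟨2 * C, ?_⟩ ⟨x, hx, y, hy, rfl⟩
  rintro _ ⟨u, hu, v, hv, rfl⟩
  have hu' := hC u hu
  have hv' := hC v hv
  rw [Real.norm_eq_abs] at hu' hv'
  linarith [abs_sub (F u) (F v)]

theorem IsPrePartition.image_of_monotone {a b : ℝ} {E : Set ℝ} (hE : E ⊆ Icc a b)
    {u : ℕ → ℝ} (hu : Monotone u) (huE : ∀ i, u i ∈ E) {S : Finset ℕ} (hS : S.Nonempty) :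
    IsPrePartition a b E (S.image fun i => (u i, u (i + 1))) := by
  refine ⟨hS.image _, ?_, ?_⟩
  · simp only [Finset.mem_image]
    rintro _ ⟨i, -, rfl⟩
    exact ⟨hu i.le_succ, huE i, huE (i + 1),
      Icc_subset_Icc (hE (huE i)).1 (hE (huE (i + 1))).2⟩
  · simp only [Finset.coe_image]
    rintro _ ⟨i, -, rfl⟩ _ ⟨j, -, rfl⟩ hij
    rcases lt_trichotomy i j with h | rfl | h
    · exact Or.inl (hu h)
    · exact absurd rfl hij
    · exact Or.inr (hu h)

theorem ACStar.mono {a b : ℝ} {F : ℝ → ℝ} {E E' : Set ℝ} (hAC : ACStar a b F E)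
    (hE' : E' ⊆ E) : ACStar a b F E' := by
  intro ε hε
  obtain ⟨δ, hδ, hD⟩ := hAC ε hε
  refine ⟨δ, hδ, fun D ⟨hne, hmem, hpw⟩ => hD D ⟨hne, fun p hp => ?_, hpw⟩⟩
  obtain ⟨h₁, h₂, h₃, h₄⟩ := hmem p hp
  exact ⟨h₁, hE' h₂, hE' h₃, h₄⟩

theorem ACStar.exists_sum_abs_sub_lt {a b : ℝ} {F : ℝ → ℝ} {E : Set ℝ}
    (hAC : ACStar a b F E) (hFc : ContinuousOn F (Icc a b)) (hE : E ⊆ Icc a b)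
    {ε : ℝ} (hε : 0 < ε) :
    ∃ δ > 0, ∀ (u : ℕ → ℝ) (n : ℕ), Monotone u → (∀ i, u i ∈ E) → u n - u 0 < δ →
      ∑ i ∈ Finset.range n, |F (u (i + 1)) - F (u i)| < ε := by
  obtain ⟨δ, hδ, hD⟩ := hAC ε hε
  refine ⟨δ, hδ, fun u n hu huE hlen => ?_⟩
  -- dropping the steps with `u i = u (i + 1)` changes no sum and makes `i ↦ (u i, u (i + 1))`
  -- injective
  set S := (Finset.range n).filter fun i => u i < u (i + 1)
  have hsum : ∑ i ∈ S, |F (u (i + 1)) - F (u i)| =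
      ∑ i ∈ Finset.range n, |F (u (i + 1)) - F (u i)| := by
    refine Finset.sum_filter_of_ne fun i _ h => (hu i.le_succ).lt_of_ne fun he => h ?_
    rw [he, sub_self, abs_zero]
  rcases S.eq_empty_or_nonempty with hS | hS
  · rwa [← hsum, hS, Finset.sum_empty]
  have hinj : Set.InjOn (fun i => (u i, u (i + 1))) S := by
    intro i hi j hj hij
    simp only [Prod.mk.injEq] at hij
    have hi' := (Finset.mem_filter.1 hi).2
    have hj' := (Finset.mem_filter.1 hj).2
    by_contra hne
    rcases lt_or_gt_of_ne hne with h | h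
    · linarith [hu (Nat.succ_le_of_lt h)]
    · linarith [hu (Nat.succ_le_of_lt h)]
  have hlen' : ∑ p ∈ S.image (fun i => (u i, u (i + 1))), (p.2 - p.1) < δ :=
    calc ∑ p ∈ S.image (fun i => (u i, u (i + 1))), (p.2 - p.1)
        = ∑ i ∈ S, (u (i + 1) - u i) := Finset.sum_image hinj
      _ ≤ ∑ i ∈ Finset.range n, (u (i + 1) - u i) :=
        Finset.sum_le_sum_of_subset_of_nonneg (Finset.filter_subset _ _)
          fun i _ _ => sub_nonneg.2 (hu i.le_succ)
      _ = u n - u 0 := Finset.sum_range_sub u n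
      _ < δ := hlen
  calc ∑ i ∈ Finset.range n, |F (u (i + 1)) - F (u i)|
      = ∑ i ∈ S, |F (u (i + 1)) - F (u i)| := hsum.symm
    _ ≤ ∑ i ∈ S, osc F (Icc (u i) (u (i + 1))) := Finset.sum_le_sum fun i _ =>
        isCompact_Icc.abs_sub_le_osc (hFc.mono (Icc_subset_Icc (hE (huE i)).1 (hE (huE (i + 1))).2))
          (right_mem_Icc.2 (hu i.le_succ)) (left_mem_Icc.2 (hu i.le_succ))
    _ = ∑ p ∈ S.image (fun i => (u i, u (i + 1))), osc F (Icc p.1 p.2) :=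
        (Finset.sum_image (f := fun p => osc F (Icc p.1 p.2)) hinj).symm
    _ < ε := hD _ (IsPrePartition.image_of_monotone hE hu huE hS) hlen'

theorem ACStar.exists_boundedVariationOn_inter_Icc {a b : ℝ} {F : ℝ → ℝ} {E : Set ℝ}
    (hAC : ACStar a b F E) (hFc : ContinuousOn F (Icc a b)) (hE : E ⊆ Icc a b) :
    ∃ δ > 0, ∀ c d, d - c < δ → BoundedVariationOn F (E ∩ Icc c d) := by
  obtain ⟨δ, hδ, hsum⟩ := hAC.exists_sum_abs_sub_lt hFc hE one_pos
  refine ⟨δ, hδ, fun c d hcd => ne_top_of_le_ne_top ENNReal.one_ne_top (iSup_le ?_)⟩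
  rintro ⟨n, u, hu, huE⟩
  have hlt := hsum u n hu (fun i => (huE i).1) (by linarith [(huE n).2.2, (huE 0).2.1])
  simp only [edist_dist, Real.dist_eq]
  rw [← ENNReal.ofReal_sum_of_nonneg fun i _ => abs_nonneg _]
  exact ENNReal.ofReal_le_one.2 hlt.le

theorem ae_accPt_principal (E : Set ℝ) : ∀ᵐ x, x ∈ E → AccPt x (𝓟 E) := by
  filter_upwards [(countable_setOfPred_isolated_right_within (s := E)).ae_notMem volume]
    with x hx hxE
  rw [accPt_principal_iff_nhdsWithin]
  refine (neBot_iff.2 fun h => hx ⟨hxE, h⟩).mono (nhdsWithin_mono _ ?_)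
  rintro y ⟨hyE, hxy⟩
  exact ⟨hyE, hxy.ne'⟩

theorem abs_le_of_hasDerivWithinAt_of_abs_sub_le {F V : ℝ → ℝ} {E : Set ℝ} {x f' v : ℝ}
    (hFV : ∀ y ∈ E, ∀ z ∈ E, y ≤ z → |F z - F y| ≤ V z - V y) (hx : x ∈ E)
    (hacc : AccPt x (𝓟 E)) (hF : HasDerivWithinAt F f' E x)
    (hV : HasDerivWithinAt V v E x) : |f'| ≤ v := by
  rw [accPt_principal_iff_nhdsWithin] at hacc
  have hslope : ∀ y ∈ E, ∀ z ∈ E, y ≤ z → |slope F y z| ≤ slope V y z := fun y hy z hz hyz => by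
    rw [slope_def_field, slope_def_field, abs_div, abs_of_nonneg (sub_nonneg.2 hyz)]
    exact div_le_div_of_nonneg_right (hFV y hy z hz hyz) (sub_nonneg.2 hyz)
  refine le_of_tendsto_of_tendsto (hasDerivWithinAt_iff_tendsto_slope.1 hF).abs
    (hasDerivWithinAt_iff_tendsto_slope.1 hV) (eventually_nhdsWithin_of_forall fun y hy => ?_)
  rcases le_total x y with hxy | hyx
  · exact hslope x hx y hy.1 hxy
  · show |slope F x y| ≤ slope V x y
    rw [slope_comm F, slope_comm V]
    exact hslope y hy.1 x hx hyx

theorem LocallyBoundedVariationOn.ae_abs_le_derivWithin_variationOnFromTo {F f : ℝ → ℝ}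
    {E : Set ℝ} (hF : LocallyBoundedVariationOn F E) (hE : MeasurableSet E) {c : ℝ} (hc : c ∈ E)
    (hf : ∀ᵐ x ∂volume.restrict E, HasDerivAt F (f x) x) :
    ∀ᵐ x ∂volume.restrict E, DifferentiableWithinAt ℝ (variationOnFromTo F E c) E x ∧
      |f x| ≤ derivWithin (variationOnFromTo F E c) E x := by
  have hV := variationOnFromTo.monotoneOn hF hc
  filter_upwards [hf, hV.ae_differentiableWithinAt hE, ae_restrict_mem hE,
    ae_restrict_of_ae (ae_accPt_principal E)] with x hfx hVx hxE hacc
  refine ⟨hVx, abs_le_of_hasDerivWithinAt_of_abs_sub_le (fun y hy z hz hyz => ?_) hxE (hacc hxE)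
    hfx.hasDerivWithinAt hVx.hasDerivWithinAt⟩
  exact variationOnFromTo.abs_sub_le_sub_of_le hF hc hy hz hyz

theorem BoundedVariationOn.integrableOn_of_hasDerivAt {F f : ℝ → ℝ} {E : Set ℝ}
    (hF : BoundedVariationOn F E) (hE : MeasurableSet E)
    (hf : ∀ᵐ x ∂volume.restrict E, HasDerivAt F (f x) x) : IntegrableOn f E := by
  rcases E.eq_empty_or_nonempty with rfl | ⟨c, hc⟩
  · exact integrableOn_empty
  set V := variationOnFromTo F E c
  set T := {x ∈ E | DifferentiableWithinAt ℝ V E x ∧ |f x| ≤ derivWithin V E x}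
  have hTE : T =ᵐ[volume] E := by
    filter_upwards [(ae_restrict_iff' hE).1
      (hF.locallyBoundedVariationOn.ae_abs_le_derivWithin_variationOnFromTo hE hc hf)] with x hx
    exact propext ⟨fun h => h.1, fun h => ⟨h, hx h⟩⟩
  -- the change of variables for `V` needs a measurable set on which it is differentiable
  obtain ⟨s, hsT, hs, hsE⟩ := (hE.nullMeasurableSet.congr hTE.symm).exists_measurable_subset_ae_eq
  have hsE' : s ⊆ E := hsT.trans (sep_subset _ _)
  refine ⟨(measurable_deriv F).aestronglyMeasurable.congr (hf.mono fun x hx => hx.deriv), ?_⟩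
  set B := (eVariationOn F E).toReal
  calc ∫⁻ x in E, ‖f x‖ₑ = ∫⁻ x in s, ‖f x‖ₑ := by rw [Measure.restrict_congr_set (hsE.trans hTE)]
    _ ≤ ∫⁻ x in s, ENNReal.ofReal (derivWithin V E x) := setLIntegral_mono' hs fun x hx => by
        rw [Real.enorm_eq_ofReal_abs]
        exact ENNReal.ofReal_le_ofReal (hsT hx).2.2
    _ = volume (V '' s) := lintegral_deriv_eq_volume_image_of_monotoneOn hs
        (fun x hx => (hsT hx).2.1.hasDerivWithinAt.mono hsE')
        ((variationOnFromTo.monotoneOn hF.locallyBoundedVariationOn hc).mono hsE')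
    _ ≤ volume (Icc (-B) B) := measure_mono <| image_subset_iff.2 fun x _ =>
        abs_le.1 (variationOnFromTo.abs_le_eVariationOn hF)
    _ < ⊤ := measure_Icc_lt_top

theorem exists_Icc_inter_subset_of_subset_iUnion {K : Set ℝ} (hK : IsClosed K)
    (hne : K.Nonempty) {C : ℕ → Set ℝ} (hC : ∀ n, IsClosed (C n)) (hKC : K ⊆ ⋃ n, C n) :
    ∃ n, ∃ x ∈ K, ∃ r > 0, Icc (x - r) (x + r) ∩ K ⊆ C n := by
  have : CompleteSpace K := hK.completeSpace_coe
  have : Nonempty K := hne.to_subtype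
  obtain ⟨n, y, hy⟩ := nonempty_interior_of_iUnion_of_closed
    (f := fun n => ((↑) : K → ℝ) ⁻¹' C n) (fun n => (hC n).preimage continuous_subtype_val)
    (eq_univ_of_forall fun y => by simpa using hKC y.2)
  obtain ⟨u, hu, huC⟩ := (mem_nhds_subtype K y _).1 (mem_interior_iff_mem_nhds.1 hy)
  obtain ⟨ε, hε, hball⟩ := Metric.mem_nhds_iff.1 hu
  refine ⟨n, y, y.2, ε / 2, half_pos hε, fun z hz => huC (a := ⟨z, hz.2⟩) (hball ?_)⟩
  rw [← Real.closedBall_eq_Icc] at hz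
  exact Metric.closedBall_subset_ball (half_lt_self hε) hz.1

theorem exists_notMem_Df_and_notMem_DF {a b : ℝ} {f F : ℝ → ℝ}
    (hF : HasDenjoyIntegralFn a b f F) {L : Set ℝ} (hL : IsClosed L) (hLne : L.Nonempty)
    (hLab : L ⊆ Icc a b) : ∃ x ∈ L, x ∉ Df f L ∧ x ∉ DF a b F L := by
  obtain ⟨hFc, -, ⟨C, hC, hCab⟩, hf⟩ := hF
  obtain ⟨n, x, hxL, ε, hε, hεC⟩ := exists_Icc_inter_subset_of_subset_iUnion hL hLne
    (fun n => (hC n).1) (hLab.trans hCab.subset)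
  obtain ⟨hCn, hCnab, hAC⟩ := hC n
  obtain ⟨δ, hδ, hBV⟩ := hAC.exists_boundedVariationOn_inter_Icc hFc hCnab
  set r := min ε (δ / 3)
  have hr : 0 < r := lt_min hε (by positivity)
  have hrε : r ≤ ε := min_le_left _ _
  have hrδ : r ≤ δ / 3 := min_le_right _ _
  have hsub : Icc (x - r) (x + r) ∩ L ⊆ C n ∩ Icc (x - r) (x + r) := fun y hy =>
    ⟨hεC ⟨Icc_subset_Icc (by linarith) (by linarith) hy.1, hy.2⟩, hy.1⟩
  have hint : IntegrableOn f (Icc (x - r) (x + r) ∩ L) :=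
    ((hBV _ _ (by linarith)).mono hsub).integrableOn_of_hasDerivAt
      (measurableSet_Icc.inter hL.measurableSet)
      (ae_restrict_of_ae_restrict_of_subset (fun y hy => hLab hy.2) hf)
  exact ⟨x, hxL, fun hx => hx.2 _ _ (by linarith) (by linarith) hint,
    fun hx => hx.2 _ _ (by linarith) (by linarith) (hAC.mono (hsub.trans inter_subset_left))⟩

theorem isClosed_sep_forall_not {K : Set ℝ} (hK : IsClosed K) (P : ℝ → ℝ → Prop) :
    IsClosed {x ∈ K | ∀ c d, c < x → x < d → ¬ P c d} := by
  refine hK.inter (isOpen_compl_iff.1 (isOpen_iff_forall_mem_open.2 fun x hx => ?_))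
  have hx : ¬ ∀ c d, c < x → x < d → ¬ P c d := hx
  push Not at hx
  obtain ⟨c, d, hc, hd, hP⟩ := hx
  exact ⟨Ioo c d, fun y hy h => h c d hy.1 hy.2 hP, isOpen_Ioo, hc, hd⟩

section TransfiniteIterates

variable (D : Set ℝ → Set ℝ) (K : Set ℝ)

theorem derivIter_zero : derivIter D K 0 = K :=
  Ordinal.limitRecOn_zero _ _ _

theorem derivIter_succ (α : Ordinal.{0}) :
    derivIter D K (Order.succ α) = D (derivIter D K α) := by
  rw [Order.succ_eq_add_one]
  exact Ordinal.limitRecOn_add_one _ _ _ _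

theorem derivIter_limit {α : Ordinal.{0}} (hα : Order.IsSuccLimit α) :
    derivIter D K α = ⋂ β : Iio α, derivIter D K β :=
  Ordinal.limitRecOn_limit _ _ _ _ hα

variable {D K}

theorem derivIter_antitone (hD : ∀ L, D L ⊆ L) : Antitone (derivIter D K) := by
  intro β α hβα
  induction α using WellFoundedLT.induction with
  | _ α ih =>
    rcases hβα.eq_or_lt with rfl | hβα
    · exact le_rfl
    rcases Ordinal.zero_or_succ_or_isSuccLimit α with rfl | ⟨γ, rfl⟩ | hα
    · exact absurd hβα not_lt_zero
    · rw [derivIter_succ]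
      exact (hD _).trans (ih γ (Order.lt_succ γ) (Order.le_of_lt_succ hβα))
    · rw [derivIter_limit D K hα]
      exact iInter_subset_of_subset ⟨β, hβα⟩ subset_rfl

theorem isClosed_derivIter (hD : ∀ L, IsClosed L → IsClosed (D L)) (hK : IsClosed K)
    (α : Ordinal.{0}) : IsClosed (derivIter D K α) := by
  induction α using WellFoundedLT.induction with
  | _ α ih =>
    rcases Ordinal.zero_or_succ_or_isSuccLimit α with rfl | ⟨γ, rfl⟩ | hα
    · rwa [derivIter_zero]
    · rw [derivIter_succ]
      exact hD _ (ih γ (Order.lt_succ γ))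
    · rw [derivIter_limit D K hα]
      exact isClosed_iInter fun β => ih β.1 β.2

end TransfiniteIterates

theorem countable_of_nonempty_diff {X ι : Type*} [TopologicalSpace X]
    [SecondCountableTopology X] [LinearOrder ι] {s t : ι → Set X} (ht : ∀ i, IsClosed (t i))
    (hst : ∀ i j, i < j → s j ⊆ t i) (hne : ∀ i, (s i \ t i).Nonempty) : Countable ι := by
  have hB := TopologicalSpace.isBasis_countableBasis X
  have hU : ∀ i, ∃ U ∈ TopologicalSpace.countableBasis X, (U ∩ s i).Nonempty ∧ U ⊆ (t i)ᶜ := by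
    intro i
    obtain ⟨x, hxs, hxt⟩ := hne i
    obtain ⟨U, hU, hxU, hUt⟩ := hB.exists_subset_of_mem_open hxt (ht i).isOpen_compl
    exact ⟨U, hU, ⟨x, hxU, hxs⟩, hUt⟩
  choose U hU hUs hUt using hU
  have hUne : ∀ i j, i < j → U i ≠ U j := fun i j hij he => by
    obtain ⟨x, hxU, hxs⟩ := hUs j
    exact hUt i (he ▸ hxU) (hst i j hij hxs)
  have : Countable (TopologicalSpace.countableBasis X) :=
    (TopologicalSpace.countable_countableBasis X).to_subtype
  refine Function.Injective.countable
    (f := fun i => (⟨U i, hU i⟩ : TopologicalSpace.countableBasis X)) fun i j hij => ?_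
  rcases lt_trichotomy i j with h | h | h
  · exact absurd (congrArg Subtype.val hij) (hUne i j h)
  · exact h
  · exact absurd (congrArg Subtype.val hij).symm (hUne j i h)

open Cardinal Ordinal in
theorem not_countable_subtype_card_le_aleph0 :
    ¬ Countable {α : Ordinal.{0} // α.card ≤ ℵ₀} := by
  intro h
  have hω₁ : ∀ α : Ordinal.{0}, α.card ≤ ℵ₀ ↔ α < ω₁ := fun α => by
    rw [card_le_iff, succ_aleph0, ord_aleph]
  set σ := ⨆ α : {α : Ordinal.{0} // α.card ≤ ℵ₀}, α.1
  have hσ : Order.succ σ < ω₁ :=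
    (isSuccLimit_omega 1).succ_lt (iSup_lt_omega_one fun α => (hω₁ α.1).1 α.2)
  exact (Order.lt_succ σ).not_ge
    (Ordinal.le_iSup (fun α : {α : Ordinal.{0} // α.card ≤ ℵ₀} => α.1) ⟨_, (hω₁ _).2 hσ⟩)

theorem derivInfty_eq_empty {D : Set ℝ → Set ℝ} {K : Set ℝ} (hK : IsClosed K)
    (hD_sub : ∀ L, D L ⊆ L) (hD_closed : ∀ L, IsClosed L → IsClosed (D L))
    (hD_ne : ∀ L ⊆ K, IsClosed L → L.Nonempty → (L \ D L).Nonempty) :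
    derivInfty D K = ∅ := by
  by_contra hne
  obtain ⟨x, hx⟩ := nonempty_iff_ne_empty.2 hne
  refine not_countable_subtype_card_le_aleph0 <| countable_of_nonempty_diff
    (s := fun α => derivIter D K α.1) (t := fun α => derivIter D K (Order.succ α.1))
    (fun α => isClosed_derivIter hD_closed hK _)
    (fun α β hαβ => derivIter_antitone hD_sub (Order.succ_le_of_lt hαβ)) fun α => ?_
  have hsubK : derivIter D K α.1 ⊆ K :=
    (derivIter_antitone hD_sub zero_le).trans (derivIter_zero D K).subset
  simp only [derivIter_succ]
  exact hD_ne _ hsubK (isClosed_derivIter hD_closed hK _) ⟨x, mem_iInter₂.1 hx α.1 α.2⟩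

theorem derivInfty_empty_of_denjoy_general (a b : ℝ) (f F : ℝ → ℝ)
    (hF : HasDenjoyIntegralFn a b f F)
    (K : Set ℝ) (hK : IsClosed K) (hKsub : K ⊆ Icc a b) :
    derivInfty (Df f) K = ∅ ∧ derivInfty (DF a b F) K = ∅ ∧
    derivInfty (DfF a b f F) K = ∅ := by
  have hDf_closed : ∀ L, IsClosed L → IsClosed (Df f L) := fun L hL =>
    isClosed_sep_forall_not hL _
  have hDF_closed : ∀ L, IsClosed L → IsClosed (DF a b F L) := fun L hL =>
    isClosed_sep_forall_not hL _
  have hgood : ∀ L ⊆ K, IsClosed L → L.Nonempty → ∃ x ∈ L, x ∉ Df f L ∧ x ∉ DF a b F L :=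
    fun L hLK hL hLne => exists_notMem_Df_and_notMem_DF hF hL hLne (hLK.trans hKsub)
  refine ⟨derivInfty_eq_empty hK (fun L => sep_subset _ _) hDf_closed fun L hLK hL hLne => ?_,
    derivInfty_eq_empty hK (fun L => sep_subset _ _) hDF_closed fun L hLK hL hLne => ?_,
    derivInfty_eq_empty hK (fun L => union_subset (sep_subset _ _) (sep_subset _ _))
      (fun L hL => (hDf_closed L hL).union (hDF_closed L hL)) fun L hLK hL hLne => ?_⟩
  all_goals obtain ⟨x, hxL, hxDf, hxDF⟩ := hgood L hLK hL hLne
  exacts [⟨x, hxL, hxDf⟩, ⟨x, hxL, hxDF⟩, ⟨x, hxL, fun hx => hx.elim hxDf hxDF⟩]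

/-- For `f ∈ Den[a,b]` with indefinite integral `F`, all three derivatives of any closed
`K ⊆ [a,b]` eventually vanish. -/
theorem derivInfty_empty_of_denjoy (a b : ℝ) (hab : a < b) (f F : ℝ → ℝ)
    (hF : HasDenjoyIntegralFn a b f F)
    (K : Set ℝ) (hK : IsClosed K) (hKsub : K ⊆ Icc a b) :
    derivInfty (Df f) K = ∅ ∧ derivInfty (DF a b F) K = ∅ ∧
    derivInfty (DfF a b f F) K = ∅ :=
  derivInfty_empty_of_denjoy_general a b f F hF K hK hKsub
end
end

section
/- Suppose F:[a,b]→ℝ is continuous and K ⊆ [a,b] is closed. (i) If D_F(K) = ∅ then F ∈ AC*(K). (ii) For any open interval (p,q), one has (p,q) ∩ D_F(K) = ∅ if and only if for all rationals r<s with [r,s] ⊆ (p,q), one has F ∈ AC*([r,s]∩K). -/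
open MeasureTheory Set Filter

noncomputable section

attribute [local instance] Classical.propDecidable

lemma ACStar.mono' {a b : ℝ} {F : ℝ → ℝ} {K K' : Set ℝ} (h : ACStar a b F K)
    (hsub : K' ⊆ K) : ACStar a b F K' := by
  intro ε hε
  obtain ⟨δ, hδ, hδ'⟩ := h ε hε
  refine ⟨δ, hδ, fun D hD hsum => hδ' D ?_ hsum⟩
  obtain ⟨h1, h2, h3⟩ := hD
  exact ⟨h1, fun p hp => ⟨(h2 p hp).1, hsub (h2 p hp).2.1, hsub (h2 p hp).2.2.1,
    (h2 p hp).2.2.2⟩, h3⟩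

lemma acstar_of_cover {a b : ℝ} {F : ℝ → ℝ} {K : Set ℝ} (hKc : IsCompact K)
    {ι : Type} (t : Finset ι) (c d : ι → ℝ)
    (hcover : K ⊆ ⋃ i ∈ t, Ioo (c i) (d i))
    (hac : ∀ i ∈ t, ACStar a b F (Icc (c i) (d i) ∩ K)) :
    ACStar a b F K := by
  rcases K.eq_empty_or_nonempty with hKe | hKne
  · intro ε hε
    refine ⟨1, one_pos, fun D hD _ => ?_⟩
    obtain ⟨pp, hp⟩ := hD.1
    have := (hD.2.1 pp hp).2.1
    rw [hKe] at this
    exact absurd this (notMem_empty _)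
  have htne : t.Nonempty := by
    obtain ⟨x, hx⟩ := hKne
    have := hcover hx
    rw [mem_iUnion₂] at this
    obtain ⟨i, hi, _⟩ := this
    exact ⟨i, hi⟩
  haveI : Nonempty ι := ⟨htne.choose⟩
  intro ε hε
  have hNpos : (0:ℝ) < (t.card : ℝ) := by
    exact_mod_cast Finset.card_pos.2 htne
  have hchoice : ∀ i ∈ t, ∃ δ > (0:ℝ), ∀ D : Finset (ℝ × ℝ),
      IsPrePartition a b (Icc (c i) (d i) ∩ K) D →
      (∑ p ∈ D, (p.2 - p.1)) < δ → (∑ p ∈ D, osc F (Icc p.1 p.2)) < ε / t.card :=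
    fun i hi => hac i hi (ε / t.card) (by positivity)
  choose! δfn hδpos hδspec using hchoice
  set δ₀ : ℝ := t.inf' htne δfn with hδ₀def
  have hδ₀pos : 0 < δ₀ := by
    rw [hδ₀def, Finset.lt_inf'_iff]
    exact hδpos
  obtain ⟨lam, hlam, hball⟩ := lebesgue_number_lemma_of_metric
    (c := fun i : {i // i ∈ t} => Ioo (c i.1) (d i.1)) hKc (fun _ => isOpen_Ioo)
    (by
      intro x hx
      have := hcover hx
      rw [mem_iUnion₂] at this
      obtain ⟨i, hi, h⟩ := this
      exact mem_iUnion.2 ⟨⟨i, hi⟩, h⟩)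
  refine ⟨min δ₀ lam, lt_min hδ₀pos hlam, ?_⟩
  intro D hD hsum
  obtain ⟨hDne, hDmem, hDpw⟩ := hD
  have hlen : ∀ p ∈ D, (0:ℝ) ≤ p.2 - p.1 :=
    fun p hp => sub_nonneg.2 (hDmem p hp).1
  have hfit : ∀ p ∈ D, ∃ i, i ∈ t ∧ Icc p.1 p.2 ⊆ Ioo (c i) (d i) := by
    intro p hp
    have h1 : p.2 - p.1 < lam :=
      lt_of_le_of_lt (Finset.single_le_sum hlen hp) (lt_of_lt_of_le hsum (min_le_right _ _))
    obtain ⟨i, hi⟩ := hball p.1 (hDmem p hp).2.1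
    refine ⟨i.1, i.2, fun y hy => hi ?_⟩
    rw [Metric.mem_ball, Real.dist_eq, abs_of_nonneg (sub_nonneg.2 hy.1)]
    exact lt_of_le_of_lt (by linarith [hy.2]) h1
  choose! g hgt hgsub using hfit
  have hfib : ∀ i ∈ t,
      (∑ p ∈ D.filter (fun p => g p = i), osc F (Icc p.1 p.2)) < ε / t.card := by
    intro i hi
    rcases (D.filter (fun p => g p = i)).eq_empty_or_nonempty with he | hne
    · rw [he, Finset.sum_empty]
      positivity
    refine hδspec i hi _ ⟨hne, ?_, ?_⟩ ?_
    · intro p hp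
      rw [Finset.mem_filter] at hp
      obtain ⟨hpD, hpg⟩ := hp
      have hsub := hgsub p hpD
      rw [hpg] at hsub
      have h1 : p.1 ∈ Ioo (c i) (d i) := hsub ⟨le_refl _, (hDmem p hpD).1⟩
      have h2 : p.2 ∈ Ioo (c i) (d i) := hsub ⟨(hDmem p hpD).1, le_refl _⟩
      exact ⟨(hDmem p hpD).1, ⟨Ioo_subset_Icc_self h1, (hDmem p hpD).2.1⟩,
        ⟨Ioo_subset_Icc_self h2, (hDmem p hpD).2.2.1⟩, (hDmem p hpD).2.2.2⟩
    · exact hDpw.mono (by exact_mod_cast Finset.filter_subset _ _)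
    · calc (∑ p ∈ D.filter (fun p => g p = i), (p.2 - p.1))
          ≤ ∑ p ∈ D, (p.2 - p.1) :=
            Finset.sum_le_sum_of_subset_of_nonneg (Finset.filter_subset _ _)
              (fun p hp _ => hlen p hp)
        _ < min δ₀ lam := hsum
        _ ≤ δ₀ := min_le_left _ _
        _ ≤ δfn i := Finset.inf'_le _ hi
  calc ∑ p ∈ D, osc F (Icc p.1 p.2)
      = ∑ i ∈ t, ∑ p ∈ D.filter (fun p => g p = i), osc F (Icc p.1 p.2) :=
        (Finset.sum_fiberwise_of_maps_to hgt _).symm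
    _ < ∑ _i ∈ t, ε / t.card := Finset.sum_lt_sum_of_nonempty htne hfib
    _ = ε := by
        rw [Finset.sum_const, nsmul_eq_mul]
        field_simp

lemma notMem_DF {a b : ℝ} {F : ℝ → ℝ} {K : Set ℝ} {x : ℝ} (hxK : x ∈ K)
    (hx : x ∉ DF a b F K) :
    ∃ c d : ℝ, c < x ∧ x < d ∧ ACStar a b F (Icc c d ∩ K) := by
  simp only [DF, mem_setOf_eq, not_and, not_forall, not_not] at hx
  obtain ⟨c, d, hc, hd, hA⟩ := hx hxK
  exact ⟨c, d, hc, hd, hA⟩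

lemma acstar_of_local {a b : ℝ} {F : ℝ → ℝ} {K : Set ℝ} (hKc : IsCompact K)
    (h : ∀ x ∈ K, ∃ c d : ℝ, c < x ∧ x < d ∧ ACStar a b F (Icc c d ∩ K)) :
    ACStar a b F K := by
  have h' : ∀ x : K, ∃ cd : ℝ × ℝ, cd.1 < x.1 ∧ x.1 < cd.2 ∧
      ACStar a b F (Icc cd.1 cd.2 ∩ K) := by
    rintro ⟨x, hxK⟩
    obtain ⟨c, d, hc, hd, hA⟩ := h x hxK
    exact ⟨(c, d), hc, hd, hA⟩
  choose u hu1 hu2 hu3 using h'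
  obtain ⟨t, ht⟩ := hKc.elim_finite_subcover (fun x : K => Ioo (u x).1 (u x).2)
    (fun _ => isOpen_Ioo) (fun x hx => mem_iUnion.2 ⟨⟨x, hx⟩, hu1 ⟨x, hx⟩, hu2 ⟨x, hx⟩⟩)
  exact acstar_of_cover hKc t (fun x => (u x).1) (fun x => (u x).2) ht (fun i _ => hu3 i)

theorem DF_empty_ACStar (a b : ℝ) (hab : a < b) (F : ℝ → ℝ)
    (hF : ContinuousOn F (Icc a b))
    (K : Set ℝ) (hK : IsClosed K) (hKsub : K ⊆ Icc a b) :
    (DF a b F K = ∅ → ACStar a b F K) ∧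
    (∀ p q : ℝ, Ioo p q ∩ DF a b F K = ∅ ↔
      ∀ r s : ℚ, (r:ℝ) < (s:ℝ) → Icc (r:ℝ) (s:ℝ) ⊆ Ioo p q →
        ACStar a b F (Icc (r:ℝ) (s:ℝ) ∩ K)) := by
  have hKcomp : IsCompact K := isCompact_Icc.of_isClosed_subset hK hKsub
  constructor
  · intro hDF
    refine acstar_of_local hKcomp (fun x hxK => notMem_DF hxK ?_)
    rw [hDF]
    exact notMem_empty x
  · intro p q
    constructor
    · intro hpq r s hrs hsub'
      set K' : Set ℝ := Icc (r:ℝ) (s:ℝ) ∩ K with hK'def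
      have hK'c : IsCompact K' := hKcomp.inter_left isClosed_Icc
      refine acstar_of_local hK'c ?_
      intro x hx
      have hxK : x ∈ K := hx.2
      have hxDF : x ∉ DF a b F K := by
        intro hmem
        have : x ∈ Ioo p q ∩ DF a b F K := ⟨hsub' hx.1, hmem⟩
        rw [hpq] at this
        exact notMem_empty x this
      obtain ⟨c, d, hc, hd, hA⟩ := notMem_DF hxK hxDF
      refine ⟨c, d, hc, hd, hA.mono' ?_⟩
      exact inter_subset_inter_right _ inter_subset_right
    · intro h
      rw [eq_empty_iff_forall_notMem]
      rintro x ⟨hxIoo, hxK, hxDF⟩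
      obtain ⟨r, hpr, hrx⟩ := exists_rat_btwn hxIoo.1
      obtain ⟨s, hxs, hsq⟩ := exists_rat_btwn hxIoo.2
      have hrs : (r:ℝ) < (s:ℝ) := lt_trans hrx hxs
      have hsub' : Icc (r:ℝ) (s:ℝ) ⊆ Ioo p q :=
        fun y hy => ⟨lt_of_lt_of_le hpr hy.1, lt_of_le_of_lt hy.2 hsq⟩
      exact hxDF r s hrx hxs (h r s hrs hsub')
end
end

section
/- Suppose M is an ℝ[X]-submodule of Den[a,b] (with X acting as the indefinite Denjoy integral) which contains C[a,b], and suppose that either (i) M = C[a,b], or (ii) M is subinterval-closed, i.e. f ∈ M implies f·χ_{(c,d)} ∈ M for every interval (c,d) ⊆ [a,b]. Then for every k ≥ 0, the index of the additive subgroup X^{k+1}M in X^k M is infinite. -/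
open MeasureTheory Set Filter

noncomputable section

attribute [local instance] Classical.propDecidable

/-- `M[a,b]`: measurable functions on `[a,b]` modulo a.e. equivalence. -/
abbrev MSpace (a b : ℝ) := ℝ →ₘ[volume.restrict (Icc a b)] ℝ

/-- The action of the indeterminate `X`: the indefinite Denjoy integral
`(X·g)(x) = ∫_a^x g` (junk value `0` if `g` is not Denjoy integrable). -/
def Xop (a b : ℝ) (g : MSpace a b) : MSpace a b :=
  if h : ∃ F : C(ℝ, ℝ), HasDenjoyIntegralFn a b (fun x => g x) ⇑F then
    AEEqFun.mk ⇑(Classical.choose h) (Classical.choose h).continuous.aestronglyMeasurable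
  else 0


/-!
`X` is injective on differences without any uniqueness theorem for ACG* primitives: if
`X g₁ - X g₂ = X g₃ - X g₄`, the chosen continuous primitives satisfy `G₁ - G₂ = G₃ - G₄` on
`[a,b]`, and differentiating almost everywhere gives `g₁ - g₂ = g₃ - g₄`. Iterating, if the
constants `c₁, c₂` had `Xᵏ c₁ - Xᵏ c₂ ∈ Xᵏ⁺¹M - Xᵏ⁺¹M`, then `c₁ - c₂ = X u - X v`, whose
continuous representative vanishes at `a`; so `c₁ = c₂`. Were finitely many cosets of `Xᵏ⁺¹M`
enough to cover `XᵏM`, two of the infinitely many constants `n ∈ ℕ` would share one.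
-/

section Denjoy

variable {a b : ℝ}

lemma osc_congr {F G : ℝ → ℝ} {J : Set ℝ} (h : EqOn F G J) : osc F J = osc G J := by
  unfold osc
  congr 1
  ext d
  exact exists_congr fun x => and_congr_right fun hx =>
    exists_congr fun y => and_congr_right fun hy => by rw [h hx, h hy]

lemma ACStar.congr {F G : ℝ → ℝ} {K : Set ℝ} (h : EqOn F G (Icc a b)) (hF : ACStar a b F K) :
    ACStar a b G K := by
  intro ε hε
  obtain ⟨δ, hδ, hAC⟩ := hF ε hε
  refine ⟨δ, hδ, fun D hD hlen => ?_⟩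
  rw [← Finset.sum_congr rfl fun p hp => osc_congr (h.mono (hD.2.1 p hp).2.2.2)]
  exact hAC D hD hlen

lemma ae_restrict_Icc_mem_Ioo : ∀ᵐ x ∂(volume.restrict (Icc a b)), x ∈ Ioo a b := by
  rw [← Measure.restrict_congr_set Ioo_ae_eq_Icc]
  exact ae_restrict_mem measurableSet_Ioo

lemma HasDenjoyIntegralFn.congr (hab : a ≤ b) {f F G : ℝ → ℝ} (hF : HasDenjoyIntegralFn a b f F)
    (hFG : EqOn F G (Icc a b)) (hG : ContinuousOn G (Icc a b)) : HasDenjoyIntegralFn a b f G := by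
  obtain ⟨-, hFa, ⟨C, hC, hCU⟩, hder⟩ := hF
  refine ⟨hG, ?_, ⟨C, fun n => ⟨(hC n).1, (hC n).2.1, ACStar.congr hFG (hC n).2.2⟩, hCU⟩, ?_⟩
  · rw [← hFG (left_mem_Icc.2 hab), hFa]
  · filter_upwards [hder, ae_restrict_Icc_mem_Ioo] with x hx hxI
    exact hx.congr_of_eventuallyEq <| Filter.mem_of_superset (isOpen_Ioo.mem_nhds hxI)
      fun y hy => (hFG (Ioo_subset_Icc_self hy)).symm

lemma HasDenjoyIntegralFn.exists_continuousMap (hab : a ≤ b) {f F : ℝ → ℝ}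
    (hF : HasDenjoyIntegralFn a b f F) : ∃ G : C(ℝ, ℝ), HasDenjoyIntegralFn a b f G := by
  have hG : Continuous (IccExtend hab ((Icc a b).domRestrict F)) := hF.1.domRestrict.Icc_extend'
  exact ⟨⟨_, hG⟩, hF.congr hab
    (fun x hx => (IccExtend_of_mem hab ((Icc a b).domRestrict F) hx).symm) hG.continuousOn⟩

lemma exists_Xop_eq_mk (hab : a ≤ b) {g : MSpace a b} (hg : DenjoyIntegrable a b fun x => g x) :
    ∃ G : C(ℝ, ℝ), HasDenjoyIntegralFn a b (fun x => g x) G ∧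
      Xop a b g = AEEqFun.mk G G.continuous.aestronglyMeasurable := by
  have h := hg.choose_spec.exists_continuousMap hab
  exact ⟨h.choose, h.choose_spec, dif_pos h⟩

lemma exists_Xop_sub_Xop_eq_mk (hab : a ≤ b) {g₁ g₂ : MSpace a b}
    (h₁ : DenjoyIntegrable a b fun x => g₁ x) (h₂ : DenjoyIntegrable a b fun x => g₂ x) :
    ∃ H : C(ℝ, ℝ), H a = 0 ∧
      (∀ᵐ x ∂(volume.restrict (Icc a b)), HasDerivAt H (g₁ x - g₂ x) x) ∧
      Xop a b g₁ - Xop a b g₂ = AEEqFun.mk H H.continuous.aestronglyMeasurable := by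
  obtain ⟨G₁, hG₁, hX₁⟩ := exists_Xop_eq_mk hab h₁
  obtain ⟨G₂, hG₂, hX₂⟩ := exists_Xop_eq_mk hab h₂
  refine ⟨G₁ - G₂, by simp [hG₁.2.1, hG₂.2.1], ?_, by rw [hX₁, hX₂, ← AEEqFun.mk_sub]; rfl⟩
  filter_upwards [hG₁.2.2.2, hG₂.2.2.2] with x hx₁ hx₂
  exact hx₁.sub hx₂

lemma ae_eq_of_hasDerivAt_of_eqOn {H₁ H₂ h₁ h₂ : ℝ → ℝ} (hH : EqOn H₁ H₂ (Icc a b))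
    (hH₁ : ∀ᵐ x ∂(volume.restrict (Icc a b)), HasDerivAt H₁ (h₁ x) x)
    (hH₂ : ∀ᵐ x ∂(volume.restrict (Icc a b)), HasDerivAt H₂ (h₂ x) x) :
    h₁ =ᵐ[volume.restrict (Icc a b)] h₂ := by
  filter_upwards [hH₁, hH₂, ae_restrict_Icc_mem_Ioo] with x hx₁ hx₂ hx
  refine hx₁.unique (hx₂.congr_of_eventuallyEq ?_)
  exact Filter.mem_of_superset (isOpen_Ioo.mem_nhds hx) fun y hy => hH (Ioo_subset_Icc_self hy)

lemma sub_eq_sub_of_Xop_sub_eq (hab : a < b) {g₁ g₂ g₃ g₄ : MSpace a b}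
    (h₁ : DenjoyIntegrable a b fun x => g₁ x) (h₂ : DenjoyIntegrable a b fun x => g₂ x)
    (h₃ : DenjoyIntegrable a b fun x => g₃ x) (h₄ : DenjoyIntegrable a b fun x => g₄ x)
    (h : Xop a b g₁ - Xop a b g₂ = Xop a b g₃ - Xop a b g₄) : g₁ - g₂ = g₃ - g₄ := by
  obtain ⟨H, -, hH, hX⟩ := exists_Xop_sub_Xop_eq_mk hab.le h₁ h₂
  obtain ⟨H', -, hH', hX'⟩ := exists_Xop_sub_Xop_eq_mk hab.le h₃ h₄
  rw [hX, hX', AEEqFun.mk_eq_mk] at h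
  have hHH' := Measure.eqOn_Icc_of_ae_eq volume hab.ne h H.continuous.continuousOn
    H'.continuous.continuousOn
  refine AEEqFun.ext ?_
  filter_upwards [AEEqFun.coeFn_sub g₁ g₂, AEEqFun.coeFn_sub g₃ g₄,
    ae_eq_of_hasDerivAt_of_eqOn hHH' hH hH'] with x hx₁₂ hx₃₄ hx
  rw [hx₁₂, hx₃₄]
  exact hx

lemma eq_of_const_sub_const_eq_Xop_sub (hab : a < b) {g₁ g₂ : MSpace a b} {c₁ c₂ : ℝ}
    (h₁ : DenjoyIntegrable a b fun x => g₁ x) (h₂ : DenjoyIntegrable a b fun x => g₂ x)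
    (h : AEEqFun.const ℝ c₁ - AEEqFun.const ℝ c₂ = Xop a b g₁ - Xop a b g₂) : c₁ = c₂ := by
  obtain ⟨H, hHa, -, hX⟩ := exists_Xop_sub_Xop_eq_mk hab.le h₁ h₂
  rw [hX, AEEqFun.const, AEEqFun.const, ← AEEqFun.mk_sub, AEEqFun.mk_eq_mk] at h
  have := Measure.eqOn_Icc_of_ae_eq volume hab.ne h continuousOn_const H.continuous.continuousOn
    (left_mem_Icc.2 hab.le)
  simpa [hHa, sub_eq_zero] using this

lemma sub_eq_sub_of_iterate_Xop_sub_eq (hab : a < b) {S : Set (MSpace a b)}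
    (hS : MapsTo (Xop a b) S S) (hDen : ∀ g ∈ S, DenjoyIntegrable a b fun x => g x)
    {g₁ g₂ g₃ g₄ : MSpace a b} (h₁ : g₁ ∈ S) (h₂ : g₂ ∈ S) (h₃ : g₃ ∈ S) (h₄ : g₄ ∈ S) (j : ℕ)
    (h : (Xop a b)^[j] g₁ - (Xop a b)^[j] g₂ = (Xop a b)^[j] g₃ - (Xop a b)^[j] g₄) :
    g₁ - g₂ = g₃ - g₄ := by
  induction j with
  | zero => exact h
  | succ j ih =>
    simp only [Function.iterate_succ_apply'] at h
    have hDen' {g} (hg : g ∈ S) := hDen _ (hS.iterate j hg)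
    exact ih (sub_eq_sub_of_Xop_sub_eq hab (hDen' h₁) (hDen' h₂) (hDen' h₃) (hDen' h₄) h)

end Denjoy

theorem index_infinite_general (a b : ℝ) (hab : a < b) (M : Submodule ℝ (MSpace a b))
    (hXcl : ∀ g ∈ M, Xop a b g ∈ M)
    (hC : ∀ F : C(ℝ, ℝ), AEEqFun.mk ⇑F F.continuous.aestronglyMeasurable ∈ M)
    (hDen : ∀ g ∈ M, DenjoyIntegrable a b fun x => g x) :
    ∀ k : ℕ, ¬ ∃ s : Finset (MSpace a b),
      ∀ g ∈ (Xop a b)^[k] '' (M : Set (MSpace a b)), ∃ h ∈ s,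
        g - h ∈ (Xop a b)^[k+1] '' (M : Set (MSpace a b)) := by
  rintro k ⟨s, hs⟩
  have hconst (c : ℝ) : AEEqFun.const ℝ c ∈ M := hC (ContinuousMap.const ℝ c)
  choose r hrs hr using fun n : ℕ => hs _ (mem_image_of_mem _ (hconst n))
  obtain ⟨n, m, hnm, hrnm⟩ := Finite.exists_ne_map_eq_of_infinite fun n => (⟨r n, hrs n⟩ : s)
  obtain ⟨u, hu, hun⟩ := hr n
  obtain ⟨v, hv, hvm⟩ := hr m
  have hdiff : (Xop a b)^[k] (AEEqFun.const ℝ (n : ℝ)) - (Xop a b)^[k] (AEEqFun.const ℝ (m : ℝ))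
      = (Xop a b)^[k] (Xop a b u) - (Xop a b)^[k] (Xop a b v) := by
    rw [← Function.iterate_succ_apply, ← Function.iterate_succ_apply, hun, hvm, Subtype.mk.inj hrnm]
    abel
  have hnm' := sub_eq_sub_of_iterate_Xop_sub_eq hab hXcl hDen (hconst n) (hconst m)
    (hXcl u hu) (hXcl v hv) k hdiff
  exact hnm (by exact_mod_cast eq_of_const_sub_const_eq_Xop_sub hab (hDen u hu) (hDen v hv) hnm')

/-- Theorem: `[XᵏM : Xᵏ⁺¹M]` is infinite, i.e. no finitely many cosets of `Xᵏ⁺¹M`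
cover `XᵏM`. -/
theorem index_infinite (a b : ℝ) (hab : a < b) (M : Submodule ℝ (MSpace a b))
    (hXcl : ∀ g ∈ M, Xop a b g ∈ M)
    (hC : ∀ F : C(ℝ, ℝ), AEEqFun.mk ⇑F F.continuous.aestronglyMeasurable ∈ M)
    (hDen : ∀ g ∈ M, DenjoyIntegrable a b fun x => g x)
    (hcase : ((M : Set (MSpace a b)) =
          {g | ∃ F : C(ℝ, ℝ), g = AEEqFun.mk ⇑F F.continuous.aestronglyMeasurable}) ∨
        (∀ g ∈ M, ∀ c d : ℝ, Ioo c d ⊆ Icc a b →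
          AEEqFun.mk ((Ioo c d).indicator fun x => g x)
            (g.aestronglyMeasurable.indicator measurableSet_Ioo) ∈ M)) :
    ∀ k : ℕ, ¬ ∃ s : Finset (MSpace a b),
      ∀ g ∈ (Xop a b)^[k] '' (M : Set (MSpace a b)), ∃ h ∈ s,
        g - h ∈ (Xop a b)^[k+1] '' (M : Set (MSpace a b)) :=
  index_infinite_general a b hab M hXcl hC hDen
end
end
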